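/- arXiv:1806.01140 — 2 statements merged into one kernel-verified Lean document; each statement's English description precedes it below -/
import Mathlib

section
/- If P is a Poisson random variable with mean λ > 0 and 0 < ε < 1, then the probability that P < (1-ε)λ is strictly less than exp(-λε²/2). -/
/-! The Chernoff bound with the mgf `exp (λ (eᵗ - 1))` of the Poisson law, at the optimal
`t = log (1 - ε)`, gives `exp (-λ (ε + (1 - ε) log (1 - ε)))`; the exponent exceeds `λ ε² / 2`
because `sinh y < y` for `y = log (1 - ε) < 0`. -/

open MeasureTheory ProbabilityTheory Real
open scoped NNReal ENNReal

namespace ProbabilityTheory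

lemma hasSum_poissonMeasure_mul_exp_mul (r : ℝ≥0) (t : ℝ) :
    HasSum (fun n : ℕ ↦ exp (-r) * r ^ n / n.factorial * exp (t * n))
      (exp (r * (exp t - 1))) := by
  have h := (NormedSpace.expSeries_div_hasSum_exp ((r : ℝ) * exp t)).mul_left (exp (-r))
  rw [← exp_eq_exp_ℝ] at h
  rw [show (r : ℝ) * (exp t - 1) = -r + r * exp t by ring, exp_add]
  refine h.congr_fun fun n ↦ ?_
  rw [mul_pow, ← exp_nat_mul, mul_comm t]
  ring

lemma integrable_exp_mul_poissonMeasure (r : ℝ≥0) (t : ℝ) :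
    Integrable (fun n : ℕ ↦ exp (t * n)) (poissonMeasure r) := by
  rw [integrable_poissonMeasure_iff]
  simpa only [norm_eq_abs, abs_exp] using (hasSum_poissonMeasure_mul_exp_mul r t).summable

lemma mgf_poissonMeasure (r : ℝ≥0) (t : ℝ) :
    mgf (fun n : ℕ ↦ (n : ℝ)) (poissonMeasure r) t = exp (r * (exp t - 1)) := by
  rw [mgf, integral_poissonMeasure]
  simpa only [smul_eq_mul] using (hasSum_poissonMeasure_mul_exp_mul r t).tsum_eq

lemma poissonMeasure_real_le_le_exp (r : ℝ≥0) {c : ℝ} (hc0 : 0 < c) (hc1 : c ≤ 1) :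
    (poissonMeasure r).real {n | (n : ℝ) ≤ c * r} ≤ exp (-r * (1 - c + c * log c)) := by
  have h := measure_le_le_exp_mul_mgf (c * r) (log_nonpos hc0.le hc1)
    (integrable_exp_mul_poissonMeasure r (log c))
  rw [mgf_poissonMeasure, exp_log hc0, ← exp_add] at h
  convert h using 2
  ring

end ProbabilityTheory

lemma Real.sq_one_sub_div_two_lt_one_sub_add_mul_log {c : ℝ} (hc0 : 0 < c) (hc1 : c < 1) :
    (1 - c) ^ 2 / 2 < 1 - c + c * log c := by
  have hsinh : (c - c⁻¹) / 2 < log c := by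
    rw [← sinh_log hc0]
    exact sinh_lt_self_iff.mpr (log_neg hc0 hc1)
  have hmul : c * ((c - c⁻¹) / 2) = (c ^ 2 - 1) / 2 := by
    field_simp
  nlinarith [mul_lt_mul_of_pos_left hsinh hc0]

/-- Chernoff bound for the lower tail of a Poisson random variable:
if `P` has law `poissonMeasure lam` with `lam > 0` and `0 < eps < 1`, then
`ℙ[P < (1-eps)·lam] < exp(-lam·eps²/2)`. -/
theorem poisson_chernoff_lower
    {Ω : Type*} [MeasurableSpace Ω] (μ : MeasureTheory.Measure Ω)
    [MeasureTheory.IsProbabilityMeasure μ]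
    (P : Ω → ℕ) (lam : ℝ≥0) (hlam : 0 < lam)
    (hP : MeasureTheory.Measure.map P μ = poissonMeasure lam)
    (ε : ℝ) (hε0 : 0 < ε) (hε1 : ε < 1) :
    μ {ω | (P ω : ℝ) < (1 - ε) * lam}
      < ENNReal.ofReal (Real.exp (-(lam : ℝ) * ε ^ 2 / 2)) := by
  have hlaw : HasLaw P (poissonMeasure lam) μ :=
    ⟨aemeasurable_of_map_neZero (by rw [hP]; infer_instance), hP⟩
  have hrate := sq_one_sub_div_two_lt_one_sub_add_mul_log (c := 1 - ε) (by linarith) (by linarith)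
  rw [sub_sub_cancel] at hrate
  calc μ {ω | (P ω : ℝ) < (1 - ε) * lam}
      ≤ μ {ω | (P ω : ℝ) ≤ (1 - ε) * lam} := measure_mono fun _ ↦ le_of_lt (α := ℝ)
    _ = ENNReal.ofReal ((poissonMeasure lam).real {n | (n : ℝ) ≤ (1 - ε) * lam}) := by
      rw [hlaw.measure_eq (p := fun n ↦ (n : ℝ) ≤ (1 - ε) * lam) .of_discrete, ofReal_measureReal]
    _ ≤ ENNReal.ofReal (exp (-lam * (1 - (1 - ε) + (1 - ε) * log (1 - ε)))) :=
      ENNReal.ofReal_le_ofReal (poissonMeasure_real_le_le_exp lam (by linarith) (by linarith))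
    _ < ENNReal.ofReal (exp (-(lam : ℝ) * ε ^ 2 / 2)) := by
      rw [ENNReal.ofReal_lt_ofReal_iff (exp_pos _), exp_lt_exp, sub_sub_cancel]
      nlinarith [NNReal.coe_pos.mpr hlam]
end

section
/- Let F₁ : ℤ → ℤ and F₂ : ℤ → ℤ be Lipschitz functions (|Fᵢ(x) - Fᵢ(y)| ≤ 1 whenever |x - y| = 1). Suppose there exist integers a < b such that the point (F₁(a), a) lies weakly below the graph of F₂ (i.e., a ≤ F₂(F₁(a))) and the point (F₁(b), b) lies strictly above (i.e., b > F₂(F₁(b))). Then there exist x, y ∈ ℤ with |(F₁(x), x) - (y, F₂(y))|₁ ≤ 1, i.e., the two Lipschitz graphs come within ℓ¹-distance 1 of each other. -/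
/-!
Put `g x = F₂ (F₁ x) - x`, so that `(F₁ x, x)` lies weakly below the graph of `F₂` iff `0 ≤ g x`.
Since `F₂ ∘ F₁` is again Lipschitz, `g` is non-increasing with steps of size at most 2, hence it
changes sign at some `z`: `0 ≤ g z` and `g z - 2 ≤ g (z + 1) < 0`. Either `g z = 0`, and `(F₁ z, z)`
lies on the graph of `F₂`, or `g (z + 1) = -1`, and `(F₁ (z + 1), z + 1)` lies one unit above it.
-/

def NeighborLipschitz (F : ℤ → ℤ) : Prop :=
  ∀ x y : ℤ, |x - y| = 1 → |F x - F y| ≤ 1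

namespace NeighborLipschitz

variable {F G : ℤ → ℤ}

theorem abs_sub_le_one (hF : NeighborLipschitz F) {x y : ℤ} (h : |x - y| ≤ 1) :
    |F x - F y| ≤ 1 := by
  rcases eq_or_ne x y with rfl | hne
  · simp
  · exact hF x y (le_antisymm h (Int.one_le_abs (sub_ne_zero.mpr hne)))

theorem comp (hG : NeighborLipschitz G) (hF : NeighborLipschitz F) :
    NeighborLipschitz (G ∘ F) :=
  fun x y h => hG.abs_sub_le_one (hF x y h)

theorem abs_add_one_sub_le_one (hF : NeighborLipschitz F) (x : ℤ) :
    |F (x + 1) - F x| ≤ 1 :=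
  hF _ _ (by simp)

theorem antitone_sub_id (hF : NeighborLipschitz F) : Antitone fun x => F x - x :=
  antitone_int_of_succ_le fun x => by
    have := (abs_le.mp (hF.abs_add_one_sub_le_one x)).2
    lia

end NeighborLipschitz

theorem Int.exists_nonneg_and_add_one_neg {g : ℤ → ℤ} {a b : ℤ} (hab : a ≤ b) (ha : 0 ≤ g a)
    (hb : g b < 0) : ∃ z, 0 ≤ g z ∧ g (z + 1) < 0 := by
  induction b, hab using Int.leInduction with
  | base => lia
  | succ b _ ih =>
    by_cases hgb : g b < 0
    · exact ih hgb
    · exact ⟨b, not_lt.mp hgb, hb⟩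

theorem lipschitz_graphs_close_general
    (F₁ F₂ : ℤ → ℤ)
    (hF₁ : ∀ x y : ℤ, |x - y| = 1 → |F₁ x - F₁ y| ≤ 1)
    (hF₂ : ∀ x y : ℤ, |x - y| = 1 → |F₂ x - F₂ y| ≤ 1)
    (a b : ℤ)
    (ha : a ≤ F₂ (F₁ a)) (hb : F₂ (F₁ b) < b) :
    ∃ x y : ℤ, |F₁ x - y| + |x - F₂ y| ≤ 1 := by
  have hG : NeighborLipschitz (F₂ ∘ F₁) := NeighborLipschitz.comp hF₂ hF₁
  have hab : a ≤ b := by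
    by_contra! hba
    have := hG.antitone_sub_id hba.le
    simp only [Function.comp_apply] at this
    lia
  obtain ⟨z, hz, hz₁⟩ := Int.exists_nonneg_and_add_one_neg (g := fun x => F₂ (F₁ x) - x) hab
    (by lia) (by lia)
  have hstep := (abs_le.mp (hG.abs_add_one_sub_le_one z)).1
  simp only [Function.comp_apply] at hstep
  by_cases hz₀ : F₂ (F₁ z) = z
  · exact ⟨z, F₁ z, by simp [hz₀]⟩
  · refine ⟨z + 1, F₁ (z + 1), ?_⟩
    rw [show F₂ (F₁ (z + 1)) = z by lia]
    simp

/-- Two Lipschitz graphs in `ℤ²` that cross come within ℓ¹-distance 1 of each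
other: if `F₁, F₂ : ℤ → ℤ` have increments at most 1 between neighboring
arguments, and `(F₁ a, a)` lies weakly below the graph of `F₂` while
`(F₁ b, b)` lies strictly above it for some `a < b`, then there are `x, y`
with `|F₁ x - y| + |x - F₂ y| ≤ 1`. -/
theorem lipschitz_graphs_close
    (F₁ F₂ : ℤ → ℤ)
    (hF₁ : ∀ x y : ℤ, |x - y| = 1 → |F₁ x - F₁ y| ≤ 1)
    (hF₂ : ∀ x y : ℤ, |x - y| = 1 → |F₂ x - F₂ y| ≤ 1)
    (a b : ℤ) (hab : a < b)
    (ha : a ≤ F₂ (F₁ a)) (hb : F₂ (F₁ b) < b) :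
    ∃ x y : ℤ, |F₁ x - y| + |x - F₂ y| ≤ 1 :=
  lipschitz_graphs_close_general F₁ F₂ hF₁ hF₂ a b ha hb
end
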